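/- Let F : C ⥤ X be a faithful essential localization such that: every pullback stable essential monomorphism in X is an isomorphism; dually, every pushout stable essential epimorphism in X is an isomorphism; and X is balanced. Then for every morphism m in C the following are equivalent: (i) m is a pullback stable essential monomorphism in C; (ii) m, viewed as a morphism of C^op, is a pullback stable essential monomorphism in C^op (equivalently, m is a pushout stable essential epimorphism in C); (iii) m is a bimorphism in C. -/
import Mathlib


open CategoryTheory Limits

/-- A morphism `m` is an essential monomorphism if it is a monomorphism and every
morphism `f` such that `m ≫ f` is a monomorphism is itself a monomorphism. -/
def IsEssentialMono {C : Type*} [CategoryTheory.Category C] {S A : C} (m : S ⟶ A) : Prop :=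
  CategoryTheory.Mono m ∧
    ∀ ⦃B : C⦄ (f : A ⟶ B), CategoryTheory.Mono (m ≫ f) → CategoryTheory.Mono f

/-- A morphism `m : S ⟶ A` is a pullback stable essential monomorphism if for every
morphism `u : X ⟶ A` the pullback projection `S ×_A X ⟶ X` of `m` along `u` is an
essential monomorphism. -/
def IsStableEssentialMono {C : Type*} [CategoryTheory.Category C]
    [CategoryTheory.Limits.HasPullbacks C] {S A : C} (m : S ⟶ A) : Prop :=
  ∀ ⦃X : C⦄ (u : X ⟶ A), IsEssentialMono (CategoryTheory.Limits.pullback.snd m u)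

/-- A morphism `e` is an essential epimorphism if it is an epimorphism and every
morphism `f` such that `f ≫ e` is an epimorphism is itself an epimorphism. -/
def IsEssentialEpi {C : Type*} [CategoryTheory.Category C] {A B : C} (e : A ⟶ B) : Prop :=
  CategoryTheory.Epi e ∧
    ∀ ⦃Z : C⦄ (f : Z ⟶ A), CategoryTheory.Epi (f ≫ e) → CategoryTheory.Epi f

/-- A morphism `e : A ⟶ B` is a pushout stable essential epimorphism if for every
morphism `u : A ⟶ Y` the pushout coprojection `Y ⟶ B ⊔_A Y` of `e` along `u` is an
essential epimorphism. -/
def IsStableEssentialEpi {C : Type*} [CategoryTheory.Category C]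
    [CategoryTheory.Limits.HasPushouts C] {A B : C} (e : A ⟶ B) : Prop :=
  ∀ ⦃Y : C⦄ (u : A ⟶ Y), IsEssentialEpi (CategoryTheory.Limits.pushout.inr e u)

/-! ### Auxiliary lemmas -/

section IsoStability

variable {C : Type*} [Category C]

lemma isEssentialMono_precomp_iso {S' S A : C} (i : S' ⟶ S) [IsIso i] {m : S ⟶ A}
    (h : IsEssentialMono m) : IsEssentialMono (i ≫ m) := by
  obtain ⟨h1, h2⟩ := h
  refine ⟨mono_comp i m, fun B f hf => ?_⟩
  apply h2 f
  have e : m ≫ f = inv i ≫ ((i ≫ m) ≫ f) := by simp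
  rw [e]
  haveI := hf
  exact mono_comp _ _

lemma isEssentialMono_precomp_iso_iff {S' S A : C} (i : S' ⟶ S) [IsIso i] {m : S ⟶ A} :
    IsEssentialMono (i ≫ m) ↔ IsEssentialMono m := by
  constructor
  · intro h
    have := isEssentialMono_precomp_iso (inv i) h
    simpa using this
  · exact isEssentialMono_precomp_iso i

lemma isEssentialMono_postcomp_iso {S A A' : C} {m : S ⟶ A} (j : A ⟶ A') [IsIso j]
    (h : IsEssentialMono m) : IsEssentialMono (m ≫ j) := by
  obtain ⟨h1, h2⟩ := h
  refine ⟨mono_comp m j, fun B f hf => ?_⟩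
  rw [Category.assoc] at hf
  have hj : Mono (j ≫ f) := h2 _ hf
  have e : f = inv j ≫ (j ≫ f) := by simp
  rw [e]
  exact mono_comp _ _

lemma isEssentialMono_comp {S A B : C} {m : S ⟶ A} {n : A ⟶ B}
    (hm : IsEssentialMono m) (hn : IsEssentialMono n) : IsEssentialMono (m ≫ n) := by
  haveI := hm.1; haveI := hn.1
  refine ⟨mono_comp m n, fun B' f hf => ?_⟩
  rw [Category.assoc] at hf
  exact hn.2 f (hm.2 (n ≫ f) hf)

lemma isEssentialEpi_precomp_iso {S' S A : C} (i : S' ⟶ S) [IsIso i] {e : S ⟶ A}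
    (h : IsEssentialEpi e) : IsEssentialEpi (i ≫ e) := by
  obtain ⟨h1, h2⟩ := h
  refine ⟨epi_comp i e, fun Z f hf => ?_⟩
  rw [← Category.assoc] at hf
  have : Epi (f ≫ i) := h2 _ hf
  have eq : f = (f ≫ i) ≫ inv i := by simp
  rw [eq]
  exact epi_comp _ _

lemma isEssentialEpi_postcomp_iso {S A A' : C} {e : S ⟶ A} (j : A ⟶ A') [IsIso j]
    (h : IsEssentialEpi e) : IsEssentialEpi (e ≫ j) := by
  obtain ⟨h1, h2⟩ := h
  refine ⟨epi_comp e j, fun Z f hf => ?_⟩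
  apply h2 f
  have eq : f ≫ e = (f ≫ e ≫ j) ≫ inv j := by simp
  rw [eq]
  haveI := hf
  rw [← Category.assoc] at hf ⊢
  exact epi_comp _ _

lemma isEssentialEpi_postcomp_iso_iff {S A A' : C} {e : S ⟶ A} (j : A ⟶ A') [IsIso j] :
    IsEssentialEpi (e ≫ j) ↔ IsEssentialEpi e := by
  constructor
  · intro h
    have := isEssentialEpi_postcomp_iso (inv j) h
    simpa using this
  · exact isEssentialEpi_postcomp_iso j

lemma isEssentialEpi_comp {S A B : C} {e₁ : S ⟶ A} {e₂ : A ⟶ B}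
    (h1 : IsEssentialEpi e₁) (h2 : IsEssentialEpi e₂) : IsEssentialEpi (e₁ ≫ e₂) := by
  haveI := h1.1; haveI := h2.1
  refine ⟨epi_comp e₁ e₂, fun Z f hf => ?_⟩
  rw [← Category.assoc] at hf
  exact h1.2 f (h2.2 (f ≫ e₁) hf)

/-- Essential monomorphisms in the opposite category correspond to essential
epimorphisms. -/
lemma isEssentialMono_op_iff {A B : C} (e : A ⟶ B) :
    IsEssentialMono e.op ↔ IsEssentialEpi e := by
  constructor
  · rintro ⟨h1, h2⟩
    refine ⟨?_, fun Z f hf => ?_⟩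
    · haveI := h1
      exact (inferInstance : Epi e.op.unop)
    · haveI := hf
      have hm : Mono (e.op ≫ f.op) := by
        rw [← op_comp]
        exact (inferInstance : Mono (f ≫ e).op)
      haveI := h2 f.op hm
      exact (inferInstance : Epi f.op.unop)
  · rintro ⟨h1, h2⟩
    refine ⟨?_, fun W f hf => ?_⟩
    · haveI := h1
      exact (inferInstance : Mono e.op)
    · haveI := hf
      have he : Epi (f.unop ≫ e) := by
        have : Epi (e.op ≫ f).unop := inferInstance
        simpa using this
      haveI := h2 f.unop he
      exact (inferInstance : Mono f.unop.op)

end IsoStability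

section Composition

variable {C : Type*} [Category C]

/-- Pullback stable essential monomorphisms are closed under composition. -/
lemma isStableEssentialMono_comp [HasPullbacks C] {S A B : C} {m : S ⟶ A} {n : A ⟶ B}
    (hm : IsStableEssentialMono m) (hn : IsStableEssentialMono n) :
    IsStableEssentialMono (m ≫ n) := by
  intro Z u
  have t : IsPullback (pullback.fst n u) (pullback.snd n u) n u := IsPullback.of_hasPullback n u
  have s : IsPullback (pullback.fst m (pullback.fst n u)) (pullback.snd m (pullback.fst n u))
      m (pullback.fst n u) := IsPullback.of_hasPullback _ _
  have big := s.paste_vert t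
  have eq : pullback.snd (m ≫ n) u =
      big.isoPullback.inv ≫ (pullback.snd m (pullback.fst n u) ≫ pullback.snd n u) :=
    (big.isoPullback_inv_snd).symm
  rw [eq]
  exact isEssentialMono_precomp_iso _
    (isEssentialMono_comp (hm (pullback.fst n u)) (hn u))

/-- Pushout stable essential epimorphisms are closed under composition. -/
lemma isStableEssentialEpi_comp [HasPushouts C] {S A B : C} {e₁ : S ⟶ A} {e₂ : A ⟶ B}
    (h1 : IsStableEssentialEpi e₁) (h2 : IsStableEssentialEpi e₂) :
    IsStableEssentialEpi (e₁ ≫ e₂) := by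
  intro Y u
  have s : IsPushout e₁ u (pushout.inl e₁ u) (pushout.inr e₁ u) := IsPushout.of_hasPushout e₁ u
  have t : IsPushout e₂ (pushout.inl e₁ u) (pushout.inl e₂ (pushout.inl e₁ u))
      (pushout.inr e₂ (pushout.inl e₁ u)) := IsPushout.of_hasPushout _ _
  have big := s.paste_horiz t
  have eq : pushout.inr (e₁ ≫ e₂) u =
      (pushout.inr e₁ u ≫ pushout.inr e₂ (pushout.inl e₁ u)) ≫ big.isoPushout.hom :=
    (big.inr_isoPushout_hom).symm
  rw [eq]
  exact isEssentialEpi_postcomp_iso _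
    (isEssentialEpi_comp (h1 u) (h2 (pushout.inl e₁ u)))

/-- Translation between pullback stable essential monomorphisms in the opposite
category and pushout stable essential epimorphisms. -/
lemma isStableEssentialMono_op_iff [HasPushouts C] {S A : C} (m : S ⟶ A) :
    IsStableEssentialMono m.op ↔ IsStableEssentialEpi m := by
  have key : ∀ {Y : C} (w : S ⟶ Y),
      IsEssentialMono (pullback.snd m.op w.op) ↔ IsEssentialEpi (pushout.inr m w) := by
    intro Y w
    have sq := (IsPushout.of_hasPushout m w).op.flip
    -- sq : IsPullback (pushout.inl m w).op (pushout.inr m w).op m.op w.op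
    have eq : pullback.snd m.op w.op = sq.isoPullback.inv ≫ (pushout.inr m w).op :=
      (sq.isoPullback_inv_snd).symm
    rw [eq, isEssentialMono_precomp_iso_iff, isEssentialMono_op_iff]
  constructor
  · intro h Y w
    exact (key w).mp (h w.op)
  · intro h Z u
    obtain ⟨Y⟩ := Z
    have : u = u.unop.op := rfl
    rw [this]
    exact (key u.unop).mpr (h u.unop)

end Composition

section Transfer

variable {C : Type*} [Category C] {X : Type*} [Category X]

/-- If `F` is faithful and preserves pullbacks, then any morphism inverted by `F` is a
pullback stable essential monomorphism. -/
lemma isStableEssentialMono_of_isIso_map [HasPullbacks C] [HasPullbacks X]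
    (F : C ⥤ X) [F.Faithful] [PreservesLimitsOfShape WalkingCospan F]
    {S A : C} (m : S ⟶ A) (hm : IsIso (F.map m)) : IsStableEssentialMono m := by
  intro Z u
  haveI := hm
  haveI : Mono m := F.mono_of_mono_map inferInstance
  refine ⟨inferInstance, fun B f hf => ?_⟩
  have hpb := (IsPullback.of_hasPullback m u).map F
  haveI : IsIso (F.map (pullback.snd m u)) := by
    rw [← hpb.isoPullback_hom_snd]
    infer_instance
  apply F.mono_of_mono_map
  have e : F.map f = inv (F.map (pullback.snd m u)) ≫ F.map (pullback.snd m u ≫ f) := by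
    rw [F.map_comp]; simp
  rw [e]
  haveI := hf
  haveI : Mono (F.map (pullback.snd m u ≫ f)) := F.map_mono _
  exact mono_comp _ _

/-- If `F` is faithful and preserves pushouts, then any morphism inverted by `F` is a
pushout stable essential epimorphism. -/
lemma isStableEssentialEpi_of_isIso_map [HasPushouts C] [HasPushouts X]
    (F : C ⥤ X) [F.Faithful] [PreservesColimitsOfShape WalkingSpan F]
    {S A : C} (m : S ⟶ A) (hm : IsIso (F.map m)) : IsStableEssentialEpi m := by
  intro Y u
  haveI := hm
  haveI : Epi m := F.epi_of_epi_map inferInstance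
  refine ⟨inferInstance, fun Z f hf => ?_⟩
  have hpo := (IsPushout.of_hasPushout m u).map F
  haveI : IsIso (F.map (pushout.inr m u)) := by
    rw [← hpo.inr_isoPushout_inv]
    infer_instance
  apply F.epi_of_epi_map
  have e : F.map f = F.map (f ≫ pushout.inr m u) ≫ inv (F.map (pushout.inr m u)) := by
    rw [F.map_comp]; simp
  rw [e]
  haveI := hf
  haveI : Epi (F.map (f ≫ pushout.inr m u)) := F.map_epi _
  exact epi_comp _ _

variable (F : C ⥤ X) (G : X ⥤ C) (H : X ⥤ C)

/-- A functor with a fully faithful right adjoint maps essential monomorphisms to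
essential monomorphisms. -/
lemma isEssentialMono_map (adj : F ⊣ G) [F.Faithful] [F.PreservesMonomorphisms]
    [IsIso adj.counit] {Z W : C} {n : Z ⟶ W} (hn : IsEssentialMono n) :
    IsEssentialMono (F.map n) := by
  haveI := hn.1
  refine ⟨F.map_mono n, fun B f hf => ?_⟩
  set fbar := (adj.homEquiv W B) f with hfb
  have hf2 : F.map fbar ≫ adj.counit.app B = f := by
    have h := (adj.homEquiv W B).symm_apply_apply f
    rwa [Adjunction.homEquiv_counit] at h
  have h3 : Mono (F.map (n ≫ fbar)) := by
    have e : F.map (n ≫ fbar) = (F.map n ≫ f) ≫ inv (adj.counit.app B) := by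
      rw [F.map_comp, ← hf2]; simp
    rw [e]
    haveI := hf
    exact mono_comp _ _
  have h5 : Mono fbar := hn.2 fbar (F.mono_of_mono_map h3)
  haveI := h5
  haveI : Mono (F.map fbar) := F.map_mono _
  rw [← hf2]
  exact mono_comp _ _

/-- A functor with a fully faithful left adjoint maps essential epimorphisms to
essential epimorphisms. -/
lemma isEssentialEpi_map (adj' : H ⊣ F) [F.Faithful] [F.PreservesEpimorphisms]
    (hu : ∀ x, IsIso (adj'.unit.app x)) {Z W : C} {e : Z ⟶ W} (he : IsEssentialEpi e) :
    IsEssentialEpi (F.map e) := by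
  haveI := he.1
  refine ⟨F.map_epi e, fun B f hf => ?_⟩
  set fbar := (adj'.homEquiv B Z).symm f with hfb
  have hf2 : adj'.unit.app B ≫ F.map fbar = f := by
    have h := (adj'.homEquiv B Z).apply_symm_apply f
    rwa [Adjunction.homEquiv_unit] at h
  haveI := hu B
  have h3 : Epi (F.map (fbar ≫ e)) := by
    have eq : F.map (fbar ≫ e) = inv (adj'.unit.app B) ≫ (f ≫ F.map e) := by
      rw [F.map_comp, ← hf2]; simp
    rw [eq]
    haveI := hf
    exact epi_comp _ _
  have h5 : Epi fbar := he.2 fbar (F.epi_of_epi_map h3)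
  haveI := h5
  haveI : Epi (F.map fbar) := F.map_epi _
  rw [← hf2]
  exact epi_comp _ _

/-- The unit of the left part of an adjoint triple `H ⊣ F ⊣ G` with `G` fully faithful
is an isomorphism (i.e. `H` is fully faithful as well). -/
lemma isIso_unit_app_of_triple (adj : F ⊣ G) (adj' : H ⊣ F) [G.Full] [G.Faithful]
    (x : X) : IsIso (adj'.unit.app x) := by
  haveI : IsIso adj.counit := adj.counit_isIso_of_R_fully_faithful
  haveI : ∀ y : X, IsIso (adj.counit.app y) := fun y => inferInstance
  set θ : H.obj x ⟶ G.obj x := (adj'.homEquiv x (G.obj x)).symm (inv (adj.counit.app x))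
    with hθdef
  have hθ : adj'.unit.app x ≫ F.map θ = inv (adj.counit.app x) := by
    have h := (adj'.homEquiv x (G.obj x)).apply_symm_apply (inv (adj.counit.app x))
    rwa [Adjunction.homEquiv_unit] at h
  set ι : F.obj (H.obj x) ⟶ x := F.map θ ≫ adj.counit.app x with hιdef
  have hri : adj'.unit.app x ≫ ι = 𝟙 x := by
    rw [hιdef, ← Category.assoc, hθ]; simp
  have hepi : Epi (adj'.unit.app x) := by
    constructor
    intro z a b hab
    have key : ∀ g : F.obj (H.obj x) ⟶ z,
        (adj'.homEquiv x (G.obj z)) ((adj.homEquiv (H.obj x) z) g) =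
          adj'.unit.app x ≫ g ≫ inv (adj.counit.app z) := by
      intro g
      have h1 := (adj.homEquiv (H.obj x) z).symm_apply_apply g
      rw [Adjunction.homEquiv_counit] at h1
      rw [Adjunction.homEquiv_unit]
      congr 1
      rw [IsIso.eq_comp_inv]
      exact h1
    have e1 : (adj'.homEquiv x (G.obj z)) ((adj.homEquiv (H.obj x) z) a) =
        (adj'.homEquiv x (G.obj z)) ((adj.homEquiv (H.obj x) z) b) := by
      rw [key a, key b, ← Category.assoc, ← Category.assoc, hab]
    exact (adj.homEquiv (H.obj x) z).injective
      ((adj'.homEquiv x (G.obj z)).injective e1)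
  refine ⟨ι, hri, ?_⟩
  have : adj'.unit.app x ≫ ι ≫ adj'.unit.app x = adj'.unit.app x ≫ 𝟙 _ := by
    rw [← Category.assoc, hri]; simp
  exact (cancel_epi (adj'.unit.app x)).mp this

/-- `F` maps pullback stable essential monomorphisms to pullback stable essential
monomorphisms. -/
lemma map_isStableEssentialMono [HasPullbacks C] [HasPullbacks X]
    (adj : F ⊣ G) [F.Faithful] [PreservesLimitsOfShape WalkingCospan F]
    [G.Full] [G.Faithful] {S A : C} {m : S ⟶ A} (hm : IsStableEssentialMono m) :
    IsStableEssentialMono (F.map m) := by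
  haveI : IsIso adj.counit := adj.counit_isIso_of_R_fully_faithful
  haveI : ∀ y : X, IsIso (adj.counit.app y) := fun y => inferInstance
  -- the unit component at `A` is inverted by `F`
  have hFη : IsIso (F.map (adj.unit.app A)) := by
    have e : F.map (adj.unit.app A) = inv (adj.counit.app (F.obj A)) :=
      (cancel_mono (adj.counit.app (F.obj A))).mp
        (by rw [adj.left_triangle_components A, IsIso.inv_hom_id]; rfl)
    rw [e]; infer_instance
  have hη : IsStableEssentialMono (adj.unit.app A) :=
    isStableEssentialMono_of_isIso_map F _ hFη
  have hn : IsStableEssentialMono (m ≫ adj.unit.app A) := isStableEssentialMono_comp hm hη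
  intro Y u
  set n : S ⟶ G.obj (F.obj A) := m ≫ adj.unit.app A with hndef
  set v : G.obj Y ⟶ G.obj (F.obj A) := G.map u with hvdef
  have base := (IsPullback.of_hasPullback n v).map F
  have key : IsPullback (F.map (pullback.fst n v))
      (F.map (pullback.snd n v) ≫ adj.counit.app Y) (F.map m) u := by
    refine base.of_iso (Iso.refl _) (Iso.refl _) (asIso (adj.counit.app Y))
      (asIso (adj.counit.app (F.obj A))) ?_ ?_ ?_ ?_
    · simp
    · simp
    · simp only [asIso_hom, Iso.refl_hom, Category.id_comp, hndef, F.map_comp]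
      rw [Category.assoc, adj.left_triangle_components A, Category.comp_id]
    · simp only [asIso_hom, hvdef]
      exact adj.counit.naturality u
  have eq : pullback.snd (F.map m) u =
      key.isoPullback.inv ≫ (F.map (pullback.snd n v) ≫ adj.counit.app Y) :=
    (key.isoPullback_inv_snd).symm
  rw [eq]
  exact isEssentialMono_precomp_iso _
    (isEssentialMono_postcomp_iso _ (isEssentialMono_map F G adj (hn v)))

/-- `F` maps pushout stable essential epimorphisms to pushout stable essential
epimorphisms. -/
lemma map_isStableEssentialEpi [HasPushouts C] [HasPushouts X]
    (adj' : H ⊣ F) [F.Faithful] [PreservesColimitsOfShape WalkingSpan F]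
    [F.PreservesEpimorphisms]
    (hu : ∀ x, IsIso (adj'.unit.app x)) {S A : C} {m : S ⟶ A}
    (hm : IsStableEssentialEpi m) : IsStableEssentialEpi (F.map m) := by
  -- the counit component at `S` is inverted by `F`
  haveI := hu (F.obj S)
  have hFδeq : F.map (adj'.counit.app S) = inv (adj'.unit.app (F.obj S)) :=
    (cancel_epi (adj'.unit.app (F.obj S))).mp
      (by rw [adj'.right_triangle_components S, IsIso.hom_inv_id]; rfl)
  have hFδ : IsIso (F.map (adj'.counit.app S)) := by rw [hFδeq]; infer_instance
  have hδ : IsStableEssentialEpi (adj'.counit.app S) :=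
    isStableEssentialEpi_of_isIso_map F _ hFδ
  have hn : IsStableEssentialEpi (adj'.counit.app S ≫ m) := isStableEssentialEpi_comp hδ hm
  intro Y u
  haveI := hu Y
  set n : H.obj (F.obj S) ⟶ A := adj'.counit.app S ≫ m with hndef
  set v : H.obj (F.obj S) ⟶ H.obj Y := H.map u with hvdef
  have base := (IsPushout.of_hasPushout n v).map F
  have key : IsPushout (F.map m) u (F.map (pushout.inl n v))
      (adj'.unit.app Y ≫ F.map (pushout.inr n v)) := by
    refine base.of_iso ((asIso (adj'.unit.app (F.obj S))).symm)
      (Iso.refl _) ((asIso (adj'.unit.app Y)).symm) (Iso.refl _) ?_ ?_ ?_ ?_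
    · simp only [Iso.refl_hom, Category.comp_id, Iso.symm_hom, asIso_inv, hndef, F.map_comp]
      rw [hFδeq]
    · simp only [Iso.symm_hom, asIso_inv, hvdef]
      rw [IsIso.eq_inv_comp, ← Category.assoc, ← Functor.comp_map,
        ← adj'.unit.naturality u, Functor.id_map, Category.assoc, IsIso.hom_inv_id,
        Category.comp_id]
    · simp
    · simp only [Iso.symm_hom, asIso_inv, Iso.refl_hom, Category.comp_id,
        IsIso.inv_hom_id_assoc]
  have eq : pushout.inr (F.map m) u =
      (adj'.unit.app Y ≫ F.map (pushout.inr n v)) ≫ key.isoPushout.hom :=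
    (key.inr_isoPushout_hom).symm
  rw [eq]
  exact isEssentialEpi_postcomp_iso _
    (isEssentialEpi_precomp_iso _ (isEssentialEpi_map F H adj' hu (hn v)))

end Transfer

/-- Let `F : C ⥤ X` be a faithful essential localization such that every pullback stable
essential monomorphism in `X` is an isomorphism, every pushout stable essential
epimorphism in `X` is an isomorphism, and `X` is balanced. Then for a morphism `m` in
`C` the following are equivalent: (i) `m` is a pullback stable essential monomorphism in
`C`; (ii) `m.op` is a pullback stable essential monomorphism in `Cᵒᵖ` (equivalently,
`m` is a pushout stable essential epimorphism in `C`); (iii) `m` is a bimorphism. -/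
theorem stableEssentialMono_selfDual
    {C : Type*} [Category C] {X : Type*} [Category X]
    [HasFiniteLimits C] [HasFiniteLimits X]
    [HasFiniteColimits C] [HasFiniteColimits X] [Balanced X]
    (F : C ⥤ X) (G : X ⥤ C) (H : X ⥤ C)
    (adj : F ⊣ G) [PreservesFiniteLimits F] [F.Faithful] [G.Full] [G.Faithful]
    (adj' : H ⊣ F)
    (hX : ∀ ⦃S A : X⦄ (n : S ⟶ A), IsStableEssentialMono n → IsIso n)
    (hX' : ∀ ⦃A B : X⦄ (e : A ⟶ B), IsStableEssentialEpi e → IsIso e)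
    {S A : C} (m : S ⟶ A) :
    (IsStableEssentialMono m ↔ IsStableEssentialMono m.op) ∧
      (IsStableEssentialMono m.op ↔ IsStableEssentialEpi m) ∧
      (IsStableEssentialMono m ↔ (Mono m ∧ Epi m)) := by
  haveI : PreservesColimitsOfSize.{0, 0} F := adj.leftAdjoint_preservesColimits
  haveI : F.PreservesEpimorphisms := inferInstance
  haveI : F.PreservesMonomorphisms := inferInstance
  have hu : ∀ x, IsIso (adj'.unit.app x) := isIso_unit_app_of_triple F G H adj adj'
  have key₁ : IsStableEssentialMono m → IsIso (F.map m) := fun h =>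
    hX _ (map_isStableEssentialMono F G adj h)
  have key₂ : IsStableEssentialEpi m → IsIso (F.map m) := fun h =>
    hX' _ (map_isStableEssentialEpi F H adj' hu h)
  have key₃ : (Mono m ∧ Epi m) → IsIso (F.map m) := by
    rintro ⟨h1, h2⟩
    haveI := h1; haveI := h2
    haveI : Mono (F.map m) := F.map_mono m
    haveI : Epi (F.map m) := F.map_epi m
    exact isIso_of_mono_of_epi _
  have back₁ : IsIso (F.map m) → IsStableEssentialMono m := fun h =>
    isStableEssentialMono_of_isIso_map F m h
  have back₂ : IsIso (F.map m) → IsStableEssentialEpi m := fun h =>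
    isStableEssentialEpi_of_isIso_map F m h
  have back₃ : IsIso (F.map m) → (Mono m ∧ Epi m) := by
    intro h
    haveI := h
    exact ⟨F.mono_of_mono_map inferInstance, F.epi_of_epi_map inferInstance⟩
  have T : IsStableEssentialMono m.op ↔ IsStableEssentialEpi m :=
    isStableEssentialMono_op_iff m
  refine ⟨?_, T, ⟨fun h => back₃ (key₁ h), fun h => back₁ (key₃ h)⟩⟩
  rw [T]
  exact ⟨fun h => back₂ (key₁ h), fun h => back₁ (key₂ h)⟩
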